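/- arXiv:2112.12479 — 4 statements merged into one kernel-verified Lean document; each statement's English description precedes it below -/
import Mathlib

section
/- For every permutation π in the symmetric group S_n, the assignment π ↦ c_π, where c_π = c_{i_1}⋯c_{i_k} for any reduced decomposition (i_1,…,i_k) of π (i.e. a minimal-length expression π = s_{i_1}⋯s_{i_k} in adjacent transpositions), is a well-defined map S_n → B_n into the braid group; that is, the braid group element c_{i_1}⋯c_{i_k} is independent of the choice of reduced decomposition. -/
namespace Stmt

/-- The adjacent transposition `s_{i+1} = (i, i+1)` (0-based) in the symmetric group on
`Fin m`; indices out of range give the identity. -/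
def sNat (m i : ℕ) : Equiv.Perm (Fin m) :=
  if h : i + 1 < m then Equiv.swap ⟨i, by omega⟩ ⟨i + 1, h⟩ else 1

/-- The permutation represented by a word in the adjacent transpositions. -/
def toPerm (m : ℕ) (l : List ℕ) : Equiv.Perm (Fin m) := (l.map (sNat m)).prod

/-- `l` is a reduced decomposition of `π`: it represents `π` and has minimal length among
all words representing `π`. -/
def IsReduced (m : ℕ) (l : List ℕ) (π : Equiv.Perm (Fin m)) : Prop :=
  toPerm m l = π ∧ ∀ l' : List ℕ, toPerm m l' = π → l.length ≤ l'.length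

end Stmt
namespace Stmt

/-- The braid relations on the generators `c_1, …, c_N` (0-based: `Fin N`) of the braid
group `B_{N+1}`. -/
def braidRels (N : ℕ) : Set (FreeGroup (Fin N)) :=
  { r | ∃ i j : Fin N,
      ((i : ℕ) + 1 = (j : ℕ) ∧
        r = FreeGroup.of i * FreeGroup.of j * FreeGroup.of i *
            (FreeGroup.of j * FreeGroup.of i * FreeGroup.of j)⁻¹) ∨
      ((i : ℕ) + 2 ≤ (j : ℕ) ∧
        r = FreeGroup.of i * FreeGroup.of j * (FreeGroup.of j * FreeGroup.of i)⁻¹) }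

/-- The braid group `B_{N+1}`, with `N` generators. -/
abbrev Braid (N : ℕ) := PresentedGroup (braidRels N)

/-- The generator `c_{i+1}` (0-based index `i`) of `B_{N+1}`; out-of-range indices give `1`. -/
def bgen (N : ℕ) (i : ℕ) : Braid N :=
  if h : i < N then PresentedGroup.of (⟨i, h⟩ : Fin N) else 1

/-- The braid group element represented by a word in the generators. -/
def bword (N : ℕ) (l : List ℕ) : Braid N := (l.map (bgen N)).prod

end Stmt

/-!
The length of `π` is its number of inversions `ℓ(π)`, and `i` can start a reduced word of `π`
exactly when `i` is a left descent, i.e. `ℓ(s_i π) < ℓ(π)`, i.e. the values `i + 1` and `i` are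
inverted in `π`. Induct on `ℓ(π)` and take two reduced words `i a` and `j b` of `π`. If `i = j`,
then `a` and `b` are reduced words of `s_i π`. Otherwise `i` and `j` are both left descents, and
tracking the inverted values shows that `π` has a reduced word `w u` with `w = i j` or `i j i`
(according to whether `|i - j| ≥ 2` or `= 1`); replacing `w` by the other side `w'` of the braid
relation gives another reduced word `w' u`. The induction hypothesis for `s_i π` and `s_j π`
gives `c_{i a} = c_{w u}` and `c_{j b} = c_{w' u}`, and `c_w = c_{w'}` in the braid group.
-/

namespace Stmt

open Equiv

section Perm

variable {m i j : ℕ}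

lemma sNat_of_not_lt (h : ¬i + 1 < m) : sNat m i = 1 := dif_neg h

lemma val_sNat_apply (h : i + 1 < m) (x : Fin m) :
    (sNat m i x : ℕ) = if (x : ℕ) = i then i + 1 else if (x : ℕ) = i + 1 then i else x := by
  rw [sNat, dif_pos h, swap_apply_def]
  split_ifs <;> simp_all [Fin.ext_iff]

lemma sNat_mul_self : sNat m i * sNat m i = 1 := by
  unfold sNat; split <;> simp

lemma sNat_mul_sNat_mul_cancel (π : Perm (Fin m)) : sNat m i * (sNat m i * π) = π := by
  rw [← mul_assoc, sNat_mul_self, one_mul]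

lemma sNat_mul_comm (hij : i + 1 ≠ j) (hji : j + 1 ≠ i) :
    sNat m i * sNat m j = sNat m j * sNat m i := by
  by_cases hi : i + 1 < m
  · by_cases hj : j + 1 < m
    · ext x
      simp only [Perm.mul_apply, val_sNat_apply hi, val_sNat_apply hj]
      split_ifs <;> omega
    · rw [sNat_of_not_lt hj, mul_one, one_mul]
  · rw [sNat_of_not_lt hi, mul_one, one_mul]

lemma sNat_braid (h : i + 2 < m) :
    sNat m i * sNat m (i + 1) * sNat m i = sNat m (i + 1) * sNat m i * sNat m (i + 1) := by
  ext x
  simp only [Perm.mul_apply, val_sNat_apply h, val_sNat_apply (show i + 1 < m by omega)]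
  split_ifs <;> omega

lemma sNat_lt_sNat_iff (h : i + 1 < m) (x y : Fin m) :
    sNat m i x < sNat m i y ↔ (x < y ∧ ¬((x : ℕ) = i ∧ (y : ℕ) = i + 1)) ∨
      ((x : ℕ) = i + 1 ∧ (y : ℕ) = i) := by
  rw [Fin.lt_def, Fin.lt_def, val_sNat_apply h, val_sNat_apply h]
  split_ifs <;> omega

lemma toPerm_cons (l : List ℕ) : toPerm m (i :: l) = sNat m i * toPerm m l := by
  simp [toPerm]

lemma toPerm_append (l l' : List ℕ) : toPerm m (l ++ l') = toPerm m l * toPerm m l' := by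
  simp [toPerm]

variable {π : Perm (Fin m)}

def numInversions (π : Perm (Fin m)) : ℕ :=
  (Finset.univ.filter fun p : Fin m × Fin m => p.1 < p.2 ∧ π p.2 < π p.1).card

lemma numInversions_one : numInversions (1 : Perm (Fin m)) = 0 := by
  simp only [numInversions, Finset.card_eq_zero, Finset.filter_eq_empty_iff]
  exact fun p _ h => lt_asymm h.1 h.2

lemma numInversions_sNat_mul_of_lt {p q : Fin m} (hpq : p < q) (hp : (π p : ℕ) = i)
    (hq : (π q : ℕ) = i + 1) : numInversions (sNat m i * π) = numInversions π + 1 := by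
  have h : i + 1 < m := hq ▸ (π q).isLt
  have hp' : ∀ a, (π a : ℕ) = i ↔ a = p := fun a =>
    ⟨fun ha => π.injective (Fin.ext (ha.trans hp.symm)), fun ha => ha ▸ hp⟩
  have hq' : ∀ a, (π a : ℕ) = i + 1 ↔ a = q := fun a =>
    ⟨fun ha => π.injective (Fin.ext (ha.trans hq.symm)), fun ha => ha ▸ hq⟩
  have hnotin :
      (p, q) ∉ Finset.univ.filter fun r : Fin m × Fin m => r.1 < r.2 ∧ π r.2 < π r.1 := by
    simp [← Fin.val_fin_lt, hp, hq]
  -- `s_i` reverses the relative order of the values `i` and `i + 1` only, so the inversions of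
  -- `s_i π` are those of `π` together with `(p, q)`.
  rw [numInversions, numInversions, ← Finset.card_insert_of_notMem hnotin]
  congr 1
  ext ⟨a, b⟩
  simp only [Finset.mem_filter, Finset.mem_univ, true_and, Finset.mem_insert, Prod.mk.injEq,
    Perm.mul_apply, sNat_lt_sNat_iff h, hp', hq']
  grind

def IsLeftDescent (π : Perm (Fin m)) (i : ℕ) : Prop :=
  ∃ p q : Fin m, p < q ∧ (π p : ℕ) = i + 1 ∧ (π q : ℕ) = i

lemma IsLeftDescent.lt (hd : IsLeftDescent π i) : i + 1 < m := by
  obtain ⟨p, -, -, hp, -⟩ := hd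
  exact hp ▸ (π p).isLt

lemma IsLeftDescent.numInversions_sNat_mul (hd : IsLeftDescent π i) :
    numInversions (sNat m i * π) + 1 = numInversions π := by
  have h := hd.lt
  obtain ⟨p, q, hpq, hp, hq⟩ := hd
  have := numInversions_sNat_mul_of_lt (i := i) (π := sNat m i * π) hpq
    (by simp [val_sNat_apply h, hp]) (by simp [val_sNat_apply h, hq])
  rwa [sNat_mul_sNat_mul_cancel, eq_comm] at this

lemma numInversions_sNat_mul_of_not_isLeftDescent (h : i + 1 < m) (hd : ¬IsLeftDescent π i) :
    numInversions (sNat m i * π) = numInversions π + 1 := by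
  set p := π⁻¹ ⟨i, by omega⟩
  set q := π⁻¹ ⟨i + 1, h⟩
  have hp : (π p : ℕ) = i := by simp [p]
  have hq : (π q : ℕ) = i + 1 := by simp [q]
  rcases lt_trichotomy p q with hpq | hpq | hpq
  · exact numInversions_sNat_mul_of_lt hpq hp hq
  · rw [hpq] at hp
    omega
  · exact absurd ⟨q, p, hpq, hq, hp⟩ hd

lemma isLeftDescent_iff_numInversions_sNat_mul_lt :
    IsLeftDescent π i ↔ numInversions (sNat m i * π) < numInversions π := by
  refine ⟨fun hd => by have := hd.numInversions_sNat_mul; omega, fun hlt => ?_⟩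
  by_contra hd
  by_cases h : i + 1 < m
  · have := numInversions_sNat_mul_of_not_isLeftDescent h hd
    omega
  · rw [sNat_of_not_lt h, one_mul] at hlt
    exact lt_irrefl _ hlt

lemma numInversions_sNat_mul_le (π : Perm (Fin m)) :
    numInversions (sNat m i * π) ≤ numInversions π + 1 := by
  by_contra! hlt
  have hd : IsLeftDescent (sNat m i * π) i := by
    rw [isLeftDescent_iff_numInversions_sNat_mul_lt, sNat_mul_sNat_mul_cancel]
    omega
  have := hd.numInversions_sNat_mul
  rw [sNat_mul_sNat_mul_cancel] at this
  omega

lemma numInversions_toPerm_le (l : List ℕ) : numInversions (toPerm m l) ≤ l.length := by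
  induction l with
  | nil => simp [toPerm, numInversions_one]
  | cons i l ih =>
    rw [toPerm_cons, List.length_cons]
    exact (numInversions_sNat_mul_le _).trans (by omega)

lemma exists_isLeftDescent_of_ne_one (hπ : π ≠ 1) : ∃ i, IsLeftDescent π i := by
  by_contra! hd
  obtain _ | m := m
  · exact hπ (Subsingleton.elim _ _)
  have hmono : StrictMono ⇑π⁻¹ := Fin.strictMono_iff_lt_succ.2 fun k => by
    refine lt_of_not_ge fun hle =>
      hd k ⟨π⁻¹ k.succ, π⁻¹ k.castSucc, ?_, by simp, by simp⟩
    exact hle.lt_of_ne (π⁻¹.injective.ne Fin.castSucc_lt_succ.ne')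
  exact hπ (inv_eq_one.1 (Equiv.ext (congrFun hmono.eq_id)))

lemma exists_toPerm_eq_length_eq_numInversions (π : Perm (Fin m)) :
    ∃ l, toPerm m l = π ∧ l.length = numInversions π := by
  induction hk : numInversions π using Nat.strong_induction_on generalizing π with
  | _ k ih =>
  by_cases hπ : π = 1
  · exact ⟨[], by simp [toPerm, hπ], by simp [← hk, hπ, numInversions_one]⟩
  obtain ⟨i, hd⟩ := exists_isLeftDescent_of_ne_one hπ
  have hlt := hd.numInversions_sNat_mul
  obtain ⟨l, hl, hlen⟩ := ih _ (by omega) (sNat m i * π) rfl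
  exact ⟨i :: l, by rw [toPerm_cons, hl, sNat_mul_sNat_mul_cancel], by simp [hlen]; omega⟩

lemma isReduced_iff {l : List ℕ} :
    IsReduced m l π ↔ toPerm m l = π ∧ l.length = numInversions π := by
  refine ⟨fun h => ⟨h.1, ?_⟩, fun h => ⟨h.1, fun l' hl' => ?_⟩⟩
  · obtain ⟨l', hl', hlen⟩ := exists_toPerm_eq_length_eq_numInversions π
    exact le_antisymm (hlen ▸ h.2 l' hl') (h.1 ▸ numInversions_toPerm_le l)
  · exact h.2 ▸ hl' ▸ numInversions_toPerm_le l'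

lemma exists_isReduced (π : Perm (Fin m)) : ∃ l, IsReduced m l π :=
  (exists_toPerm_eq_length_eq_numInversions π).imp fun _ => isReduced_iff.2

lemma isReduced_cons_iff {l : List ℕ} :
    IsReduced m (i :: l) π ↔ IsLeftDescent π i ∧ IsReduced m l (sNat m i * π) := by
  simp only [isReduced_iff, toPerm_cons, List.length_cons]
  constructor
  · rintro ⟨hl, hlen⟩
    have htail : toPerm m l = sNat m i * π := by rw [← hl, sNat_mul_sNat_mul_cancel]
    have hle := numInversions_toPerm_le (m := m) l
    rw [htail] at hle
    have hd : IsLeftDescent π i := isLeftDescent_iff_numInversions_sNat_mul_lt.2 (by omega)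
    have := hd.numInversions_sNat_mul
    exact ⟨hd, htail, by omega⟩
  · rintro ⟨hd, hl, hlen⟩
    have := hd.numInversions_sNat_mul
    exact ⟨by rw [hl, sNat_mul_sNat_mul_cancel], by omega⟩

lemma IsLeftDescent.sNat_mul (hd : IsLeftDescent π j) (hij : i + 1 ≠ j) (hji : j + 1 ≠ i)
    (hne : i ≠ j) : IsLeftDescent (sNat m i * π) j := by
  by_cases h : i + 1 < m
  · obtain ⟨p, q, hpq, hp, hq⟩ := hd
    refine ⟨p, q, hpq, ?_, ?_⟩ <;>
      simp only [Perm.mul_apply, val_sNat_apply h, hp, hq] <;> split_ifs <;> omega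
  · rwa [sNat_of_not_lt h, one_mul]

lemma IsLeftDescent.sNat_mul_of_succ (hi : IsLeftDescent π i) (hi' : IsLeftDescent π (i + 1)) :
    IsLeftDescent (sNat m i * π) (i + 1) := by
  have h := hi.lt
  obtain ⟨p, q, hpq, hp, hq⟩ := hi
  obtain ⟨p', q', hpq', hp', hq'⟩ := hi'
  have hq'p : q' = p := π.injective (Fin.ext (hq'.trans hp.symm))
  refine ⟨p', q, hpq'.trans (hq'p ▸ hpq), ?_, ?_⟩ <;>
    simp only [Perm.mul_apply, val_sNat_apply h, hp', hq] <;> split_ifs <;> omega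

lemma IsLeftDescent.sNat_succ_mul_sNat_mul (hd : IsLeftDescent π (i + 1)) :
    IsLeftDescent (sNat m (i + 1) * (sNat m i * π)) i := by
  have h := hd.lt
  obtain ⟨p, q, hpq, hp, hq⟩ := hd
  refine ⟨p, q, hpq, ?_, ?_⟩ <;>
    simp only [Perm.mul_apply, val_sNat_apply h, val_sNat_apply (show i + 1 < m by omega), hp,
      hq] <;>
    split_ifs <;> omega

/-- The alternating word `i j i ⋯` of length the order of `s_i s_j`: one side of the braid
relation between `i` and `j` (for `i = j` it is just `i i`). -/
def braidWord (i j : ℕ) : List ℕ := i :: j :: if i + 1 = j ∨ j + 1 = i then [i] else []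

lemma length_braidWord_comm (i j : ℕ) : (braidWord j i).length = (braidWord i j).length := by
  simp only [braidWord, or_comm (a := j + 1 = i)]
  split_ifs <;> rfl

lemma toPerm_braidWord_comm (hi : i + 1 < m) (hj : j + 1 < m) :
    toPerm m (braidWord i j) = toPerm m (braidWord j i) := by
  simp only [braidWord, toPerm, or_comm (a := j + 1 = i)]
  split_ifs with hadj
  · simp only [List.map_cons, List.map_nil, List.prod_cons, List.prod_nil, mul_one, ← mul_assoc]
    rcases hadj with rfl | rfl
    · exact sNat_braid hj
    · exact (sNat_braid hi).symm
  · simpa using sNat_mul_comm (m := m) (not_or.1 hadj).1 (not_or.1 hadj).2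

lemma IsReduced.braidWord_comm {u : List ℕ} (h : IsReduced m (braidWord i j ++ u) π) :
    IsReduced m (braidWord j i ++ u) π := by
  have hi := (isReduced_cons_iff.1 h).1.lt
  have hj := (isReduced_cons_iff.1 (isReduced_cons_iff.1 h).2).1.lt
  refine ⟨?_, fun l hl => ?_⟩
  · rw [toPerm_append, ← toPerm_braidWord_comm hi hj, ← toPerm_append]
    exact h.1
  · rw [List.length_append, length_braidWord_comm, ← List.length_append]
    exact h.2 l hl

lemma exists_isReduced_braidWord_append (hi : IsLeftDescent π i) (hj : IsLeftDescent π j)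
    (hij : i ≠ j) : ∃ u, IsReduced m (braidWord i j ++ u) π := by
  wlog hlt : i < j generalizing i j
  · obtain ⟨u, hu⟩ := this hj hi hij.symm (by omega)
    exact ⟨u, hu.braidWord_comm⟩
  rcases (show j = i + 1 ∨ i + 2 ≤ j by omega) with rfl | hfar
  · obtain ⟨u, hu⟩ := exists_isReduced (sNat m i * (sNat m (i + 1) * (sNat m i * π)))
    refine ⟨u, ?_⟩
    simp only [braidWord, true_or, if_true, List.cons_append, List.nil_append, isReduced_cons_iff]
    exact ⟨hi, hi.sNat_mul_of_succ hj, hj.sNat_succ_mul_sNat_mul, hu⟩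
  · obtain ⟨u, hu⟩ := exists_isReduced (sNat m j * (sNat m i * π))
    refine ⟨u, ?_⟩
    simp only [braidWord, show ¬(i + 1 = j ∨ j + 1 = i) by omega, if_false, List.cons_append,
      List.nil_append, isReduced_cons_iff]
    exact ⟨hi, hj.sNat_mul (by omega) (by omega) (by omega), hu⟩

end Perm

section Braid

variable {N i j : ℕ}

lemma bword_cons (l : List ℕ) : bword N (i :: l) = bgen N i * bword N l := by
  simp [bword]

lemma bword_append (l l' : List ℕ) : bword N (l ++ l') = bword N l * bword N l' := by
  simp [bword]

lemma bgen_mul_bgen_comm (h : i + 2 ≤ j) : bgen N i * bgen N j = bgen N j * bgen N i := by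
  by_cases hj : j < N
  · rw [bgen, bgen, dif_pos hj, dif_pos (by omega)]
    exact PresentedGroup.mk_eq_mk_of_mul_inv_mem ⟨_, _, Or.inr ⟨h, rfl⟩⟩
  · rw [show bgen N j = 1 from dif_neg hj, mul_one, one_mul]

lemma bgen_braid (h : i + 1 < N) :
    bgen N i * bgen N (i + 1) * bgen N i = bgen N (i + 1) * bgen N i * bgen N (i + 1) := by
  rw [bgen, bgen, dif_pos h, dif_pos (by omega)]
  exact PresentedGroup.mk_eq_mk_of_mul_inv_mem ⟨_, _, Or.inl ⟨rfl, rfl⟩⟩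

lemma bword_braidWord_comm (hi : i < N) (hj : j < N) :
    bword N (braidWord i j) = bword N (braidWord j i) := by
  simp only [braidWord, bword, or_comm (a := j + 1 = i)]
  split_ifs with hadj
  · simp only [List.map_cons, List.map_nil, List.prod_cons, List.prod_nil, mul_one, ← mul_assoc]
    rcases hadj with rfl | rfl
    · exact bgen_braid hj
    · exact (bgen_braid hi).symm
  · simp only [List.map_cons, List.map_nil, List.prod_cons, List.prod_nil, mul_one]
    rcases lt_trichotomy i j with hlt | rfl | hlt
    · exact bgen_mul_bgen_comm (by omega)
    · rfl
    · exact (bgen_mul_bgen_comm (by omega)).symm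

end Braid

/-- **Matsumoto.** For a permutation `π` of `{1,…,n+1}`, the braid-group
element `c_{i_1} ⋯ c_{i_k}` obtained from a reduced decomposition `(i_1,…,i_k)` of `π`
is independent of the choice of reduced decomposition; hence `π ↦ c_π` is a well-defined
map `S_{n+1} → B_{n+1}`. -/
theorem matsumoto_well_defined (n : ℕ) (π : Equiv.Perm (Fin (n + 1))) (l₁ l₂ : List ℕ)
    (h₁ : IsReduced (n + 1) l₁ π) (h₂ : IsReduced (n + 1) l₂ π) :
    bword n l₁ = bword n l₂ := by
  induction hk : numInversions π using Nat.strong_induction_on generalizing π l₁ l₂ with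
  | _ k ih =>
  have same_head : ∀ {i a a'},
      IsReduced (n + 1) (i :: a) π → IsReduced (n + 1) (i :: a') π →
      bword n (i :: a) = bword n (i :: a') := by
    intro i a a' ha ha'
    rw [isReduced_cons_iff] at ha ha'
    have := ha.1.numInversions_sNat_mul
    rw [bword_cons, bword_cons, ih _ (by omega) _ _ _ ha.2 ha'.2 rfl]
  rcases l₁ with _ | ⟨i, a⟩ <;> rcases l₂ with _ | ⟨j, b⟩
  · rfl
  · exact absurd (h₂.2 [] h₁.1) (by simp)
  · exact absurd (h₁.2 [] h₂.1) (by simp)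
  obtain ⟨hi, -⟩ := isReduced_cons_iff.1 h₁
  obtain ⟨hj, -⟩ := isReduced_cons_iff.1 h₂
  by_cases hij : i = j
  · subst hij
    exact same_head h₁ h₂
  obtain ⟨u, hu⟩ := exists_isReduced_braidWord_append hi hj hij
  calc bword n (i :: a) = bword n (braidWord i j ++ u) := same_head h₁ hu
    _ = bword n (braidWord j i ++ u) := by
      rw [bword_append, bword_append, bword_braidWord_comm (Nat.succ_lt_succ_iff.1 hi.lt)
        (Nat.succ_lt_succ_iff.1 hj.lt)]
    _ = bword n (j :: b) := (same_head h₂ hu.braidWord_comm).symm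

end Stmt
end

section
/- Let V be a vector space over a field k, c ∈ End(V), w ∈ V, m ∈ ℕ₀, q ∈ k. Assume w, c(w), …, c^m(w) are linearly independent and c^{m+1}(w) = q·w. Let π : V → V/ker(id + c) be the quotient map. If q = (−1)^{m+1}, then π(c(w)), …, π(c^m(w)) are linearly independent and Σ_{k=1}^m (−1)^k π(c^k(w)) = −π(w). If q ≠ (−1)^{m+1}, then π(w), π(c(w)), …, π(c^m(w)) are linearly independent. -/
/-!
Write an element of `span (w, c w, …, c^m w)` as `∑ aᵢ • cⁱ w`. Because `c^(m+1) w = q • w`,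
applying `1 + c` yields the coefficients `a₀ + q aₘ` and `aⱼ₊₁ + aⱼ`, so by independence the element
lies in `ker (1 + c)` exactly when `aᵢ = (-1)ⁱ a₀` and `(1 + q (-1)^m) a₀ = 0`. Thus the kernel meets
`span (c w, …, c^m w)` trivially, and meets `span (w, …, c^m w)` trivially unless
`q = (-1)^(m+1)`, in which case it contains `∑ (-1)ⁱ cⁱ w`, giving the stated relation.
-/

open Module Submodule

theorem one_add_mul_neg_one_pow_eq_zero_iff {R : Type*} [CommRing R] {q : R} {m : ℕ} :
    1 + q * (-1) ^ m = 0 ↔ q = (-1) ^ (m + 1) := by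
  have hsq : ((-1 : R) ^ m) ^ 2 = 1 := by rw [← pow_mul, mul_comm, pow_mul, neg_one_sq, one_pow]
  constructor
  · intro h
    linear_combination (-1) ^ m * h - q * hsq
  · rintro rfl
    linear_combination -hsq

theorem Finset.sum_range_succ_eq_add_sum_Icc {M : Type*} [AddCommMonoid M] (f : ℕ → M) (m : ℕ) :
    ∑ i ∈ range (m + 1), f i = f 0 + ∑ i ∈ Icc 1 m, f i := by
  rw [range_eq_Ico, sum_eq_sum_Ico_succ_bot (by omega : 0 < m + 1), zero_add,
    Ico_add_one_right_eq_Icc]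

section

variable {R M : Type*} [CommRing R] [AddCommGroup M] [Module R M] {c : End R M} {w : M}
  {m : ℕ} {q : R}

theorem one_add_apply_sum_pow_smul (hcw : (c ^ (m + 1)) w = q • w) (a : Fin (m + 1) → R) :
    (1 + c) (∑ i, a i • (c ^ (i : ℕ)) w) =
      ∑ i, (Fin.cons (a 0 + q * a (Fin.last m)) (fun j : Fin m => a j.succ + a j.castSucc) :
        Fin (m + 1) → R) i • (c ^ (i : ℕ)) w := by
  have shift : c (∑ i, a i • (c ^ (i : ℕ)) w) =
      (q * a (Fin.last m)) • w + ∑ j : Fin m, a j.castSucc • (c ^ ((j : ℕ) + 1)) w := by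
    rw [map_sum, Fin.sum_univ_castSucc]
    simp only [map_smul, ← Module.End.mul_apply, ← pow_succ', Fin.val_castSucc, Fin.val_last,
      hcw, smul_smul, mul_comm q]
    abel
  rw [LinearMap.add_apply, Module.End.one_apply, shift, Fin.sum_univ_succ, Fin.sum_univ_succ]
  simp only [Fin.cons_zero, Fin.cons_succ, Fin.val_zero, Fin.val_succ, pow_zero,
    Module.End.one_apply, add_smul, Finset.sum_add_distrib]
  abel

theorem alternating_of_sum_mem_ker_one_add
    (hli : LinearIndependent R (fun i : Fin (m + 1) => (c ^ (i : ℕ)) w))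
    (hcw : (c ^ (m + 1)) w = q • w) (a : Fin (m + 1) → R)
    (ha : ∑ i, a i • (c ^ (i : ℕ)) w ∈ LinearMap.ker (1 + c)) :
    (∀ i, a i = (-1) ^ (i : ℕ) * a 0) ∧ (1 + q * (-1) ^ m) * a 0 = 0 := by
  rw [LinearMap.mem_ker, one_add_apply_sum_pow_smul hcw] at ha
  have hb := Fintype.linearIndependent_iff.mp hli _ ha
  have hstep : ∀ j : Fin m, a j.succ = - a j.castSucc := fun j => by
    simpa [eq_neg_iff_add_eq_zero] using hb j.succ
  have halt : ∀ i, a i = (-1) ^ (i : ℕ) * a 0 := by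
    refine Fin.induction (by simp) fun j ih => ?_
    rw [hstep, ih, Fin.val_succ, Fin.val_castSucc, pow_succ]
    ring
  refine ⟨halt, ?_⟩
  have h0 := hb 0
  rw [Fin.cons_zero, halt (Fin.last m), Fin.val_last] at h0
  linear_combination h0

theorem disjoint_span_pow_succ_ker_one_add
    (hli : LinearIndependent R (fun i : Fin (m + 1) => (c ^ (i : ℕ)) w))
    (hcw : (c ^ (m + 1)) w = q • w) :
    Disjoint (span R (Set.range fun i : Fin m => (c ^ ((i : ℕ) + 1)) w))
      (LinearMap.ker (1 + c)) := by
  refine disjoint_def.mpr fun x hx hker => ?_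
  obtain ⟨g, rfl⟩ := (mem_span_range_iff_exists_fun R).mp hx
  have hsum : ∑ i, g i • (c ^ ((i : ℕ) + 1)) w =
      ∑ i, (Fin.cons 0 g : Fin (m + 1) → R) i • (c ^ (i : ℕ)) w := by
    simp [Fin.sum_univ_succ]
  rw [hsum] at hker ⊢
  have hzero : ∀ i, (Fin.cons 0 g : Fin (m + 1) → R) i = 0 := fun i => by
    rw [(alternating_of_sum_mem_ker_one_add hli hcw _ hker).1 i, Fin.cons_zero, mul_zero]
  simp [hzero]

theorem sum_neg_one_pow_smul_mem_ker_one_add (hcw : (c ^ (m + 1)) w = q • w)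
    (hq : q = (-1) ^ (m + 1)) :
    ∑ i ∈ Finset.range (m + 1), (-1 : R) ^ i • (c ^ i) w ∈ LinearMap.ker (1 + c) := by
  rw [← Fin.sum_univ_eq_sum_range (fun i => (-1 : R) ^ i • (c ^ i) w), LinearMap.mem_ker,
    one_add_apply_sum_pow_smul hcw]
  refine Finset.sum_eq_zero fun i _ => ?_
  cases i using Fin.cases with
  | zero => simp [one_add_mul_neg_one_pow_eq_zero_iff.mpr hq]
  | succ j => simp [pow_succ]

end

theorem disjoint_span_pow_ker_one_add {R M : Type*} [CommRing R] [NoZeroDivisors R]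
    [AddCommGroup M] [Module R M] {c : End R M} {w : M} {m : ℕ} {q : R}
    (hli : LinearIndependent R (fun i : Fin (m + 1) => (c ^ (i : ℕ)) w))
    (hcw : (c ^ (m + 1)) w = q • w) (hq : q ≠ (-1) ^ (m + 1)) :
    Disjoint (span R (Set.range fun i : Fin (m + 1) => (c ^ (i : ℕ)) w))
      (LinearMap.ker (1 + c)) := by
  refine disjoint_def.mpr fun x hx hker => ?_
  obtain ⟨a, rfl⟩ := (mem_span_range_iff_exists_fun R).mp hx
  obtain ⟨halt, h0⟩ := alternating_of_sum_mem_ker_one_add hli hcw a hker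
  have ha0 : a 0 = 0 :=
    (mul_eq_zero.mp h0).resolve_left (one_add_mul_neg_one_pow_eq_zero_iff.not.mpr hq)
  have hzero : ∀ i, a i = 0 := fun i => by rw [halt, ha0, mul_zero]
  simp [hzero]

/-- Let `V` be a vector space over a field `k`, `c ∈ End(V)`, `w ∈ V`,
`m ∈ ℕ₀`, `q ∈ k`.  Assume `w, c(w), …, c^m(w)` are linearly independent and
`c^{m+1}(w) = q • w`.  Let `π : V → V / ker(id + c)` be the quotient map.
If `q = (−1)^{m+1}`, then `π(c(w)), …, π(c^m(w))` are linearly independent and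
`Σ_{j=1}^m (−1)^j π(c^j w) = −π(w)`.  If `q ≠ (−1)^{m+1}`, then
`π(w), π(c(w)), …, π(c^m(w))` are linearly independent. -/
theorem quotient_images_linearIndependent
    (k : Type*) [Field k] (V : Type*) [AddCommGroup V] [Module k V]
    (c : Module.End k V) (w : V) (m : ℕ) (q : k)
    (hli : LinearIndependent k (fun i : Fin (m + 1) => (c ^ (i : ℕ)) w))
    (hcw : (c ^ (m + 1)) w = q • w) :
    (q = (-1) ^ (m + 1) →
      (LinearIndependent k
          (fun i : Fin m => (LinearMap.ker (1 + c)).mkQ ((c ^ ((i : ℕ) + 1)) w)) ∧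
        ∑ j ∈ Finset.Icc 1 m,
            ((-1 : k) ^ j) • (LinearMap.ker (1 + c)).mkQ ((c ^ j) w) =
          - (LinearMap.ker (1 + c)).mkQ w)) ∧
    (q ≠ (-1) ^ (m + 1) →
      LinearIndependent k
        (fun i : Fin (m + 1) => (LinearMap.ker (1 + c)).mkQ ((c ^ (i : ℕ)) w))) := by
  set K := LinearMap.ker (1 + c)
  refine ⟨fun hq => ⟨?_, ?_⟩, fun hq => ?_⟩
  · refine (hli.comp Fin.succ (Fin.succ_injective m)).map ?_
    rw [ker_mkQ]
    exact disjoint_span_pow_succ_ker_one_add hli hcw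
  · have h : K.mkQ (∑ i ∈ Finset.range (m + 1), (-1 : k) ^ i • (c ^ i) w) = 0 := by
      rw [← LinearMap.mem_ker, ker_mkQ]
      exact sum_neg_one_pow_smul_mem_ker_one_add hcw hq
    rw [map_sum, Finset.sum_range_succ_eq_add_sum_Icc] at h
    simpa using eq_neg_of_add_eq_zero_right h
  · refine hli.map ?_
    rw [ker_mkQ]
    exact disjoint_span_pow_ker_one_add hli hcw hq
end

section
/- Let k be a field, θ ∈ ℕ, and let D be a Dynkin datum consisting of D_j ∈ k^× for j ∈ {1,…,θ} and D_{jk} = D_{kj} ∈ k^× for j ≠ k (with D_{jj} := D_j²). Fix i and suppose D is i-finite, i.e. for each j ≠ i the number a_{ij} := −min{ m ∈ ℕ₀ : (m+1)_{D_i} (D_i^m D_{ij} − 1) = 0 } is well-defined (the set is nonempty), and set a_{ii} = 2. Define the reflected datum R_i(D) by R_i(D)_j = D_j · D_{ij}^{−a_{ij}} · D_i^{a_{ij}²} and R_i(D)_{jk} = D_{jk} · D_{ik}^{−a_{ij}} · D_{ij}^{−a_{ik}} · D_i^{2 a_{ij} a_{ik}}. Then: (1) a_{ij}^{R_i(D)}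 = a_{ij}^{D} for all j; (2) R_i(D) is i-finite; (3) R_i(R_i(D)) = D. -/
namespace Stmt

/-- A Dynkin datum on `θ` vertices over a field `k`: vertex labels `D_j ∈ k^×` and edge
labels `D_{jl} ∈ k^×`.  (The conditions `D_{jl} = D_{lj}` and `D_{jj} = D_j²` are recorded
in `IsDynkin`.) -/
structure DynkinDatum (k : Type*) [Field k] (θ : ℕ) where
  v : Fin θ → kˣ
  e : Fin θ → Fin θ → kˣ

variable {k : Type*} [Field k] {θ : ℕ}

/-- The conventions on the labels of a Dynkin datum: `D_{jl} = D_{lj}` and `D_{jj} = D_j²`. -/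
def IsDynkin (D : DynkinDatum k θ) : Prop :=
  (∀ j l, D.e j l = D.e l j) ∧ (∀ j, D.e j j = D.v j * D.v j)

/-- The q-integer `(m)_a = 1 + a + ⋯ + a^{m−1}`. -/
def qInt (a : k) (m : ℕ) : k := ∑ i ∈ Finset.range m, a ^ i

/-- The set `{ m ∈ ℕ₀ : (m+1)_{D_i} (D_i^m D_{ij} − 1) = 0 }` whose minimum is `−a_{ij}`. -/
def cartanSet (D : DynkinDatum k θ) (i j : Fin θ) : Set ℕ :=
  {m : ℕ | qInt (D.v i : k) (m + 1) * ((D.v i : k) ^ m * (D.e i j : k) - 1) = 0}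

/-- The Cartan-type integers of a Dynkin datum: `a_{ii} = 2` and, for `j ≠ i`,
`a_{ij} = −min{ m : (m+1)_{D_i} (D_i^m D_{ij} − 1) = 0 }`. -/
noncomputable def aij (D : DynkinDatum k θ) (i j : Fin θ) : ℤ :=
  if i = j then 2 else -(Int.ofNat (sInf (cartanSet D i j)))

/-- `D` is `i`-finite: the minima defining `a_{ij}` exist for all `j ≠ i`. -/
def IFinite (D : DynkinDatum k θ) (i : Fin θ) : Prop :=
  ∀ j, j ≠ i → (cartanSet D i j).Nonempty

/-- The `i`-th reflection `R_i(D)` of a Dynkin datum: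
`R_i(D)_j = D_j D_{ij}^{−a_{ij}} D_i^{a_{ij}²}` and
`R_i(D)_{jl} = D_{jl} D_{il}^{−a_{ij}} D_{ij}^{−a_{il}} D_i^{2 a_{ij} a_{il}}`. -/
noncomputable def reflect (D : DynkinDatum k θ) (i : Fin θ) : DynkinDatum k θ where
  v j := D.v j * D.e i j ^ (-aij D i j) * D.v i ^ (aij D i j ^ 2)
  e j l := D.e j l * D.e i l ^ (-aij D i j) * D.e i j ^ (-aij D i l) *
    D.v i ^ (2 * aij D i j * aij D i l)

/-- The set `{ m ∈ ℕ₀ : (m+1)_{D_i} = 0 }` whose minimum is `m_i^D`. -/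
def qSet (D : DynkinDatum k θ) (i : Fin θ) : Set ℕ :=
  {m : ℕ | qInt (D.v i : k) (m + 1) = 0}

end Stmt

namespace Stmt

/-! With `q = D_i`, `e = D_{ij}` and `n = -a_{ij}`, the reflected label is `e' = (e q^{2n})⁻¹`,
and `q^n e' - 1 = -(q^n e)⁻¹ (q^n e - 1)`, so `n` is again a root of
`(m+1)_q (q^m e' - 1)`. It is again the least one: since `n` is a root for `e`, either
`q^n e = 1`, and then `e' = e`, or `(n+1)_q = 0`, so `q^{n+1} = 1`, and then a root `m < n` of
`q^m e' = 1` yields the root `n - 1 - m` of `q^m e = 1`. Hence `R_i` does not change the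
`i`-th row of Cartan integers, and `R_i(R_i(D)) = D` becomes an identity in the abelian
group `kˣ`. -/

section CartanRoots

variable {k : Type*} [Field k]

theorem pow_eq_one_of_qInt_eq_zero {q : k} {m : ℕ} (h : qInt q m = 0) : q ^ m = 1 := by
  rw [← sub_eq_zero, ← geom_sum_mul, ← qInt, h, zero_mul]

def cartanRoots (q e : k) : Set ℕ :=
  {m | qInt q (m + 1) * (q ^ m * e - 1) = 0}

theorem mem_cartanRoots_iff {q e : k} {m : ℕ} :
    m ∈ cartanRoots q e ↔ qInt q (m + 1) = 0 ∨ q ^ m * e = 1 :=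
  mul_eq_zero.trans (or_congr_right sub_eq_zero)

theorem mem_cartanRoots_reflect {q e : k} (hq : q ≠ 0) (he : e ≠ 0) {n : ℕ}
    (hn : n ∈ cartanRoots q e) : n ∈ cartanRoots q (e * q ^ (2 * n))⁻¹ := by
  have hqn : q ^ n * e ≠ 0 := mul_ne_zero (pow_ne_zero n hq) he
  have key : q ^ n * (e * q ^ (2 * n))⁻¹ - 1 = -(q ^ n * e)⁻¹ * (q ^ n * e - 1) := by
    field_simp
    ring
  change _ * _ = 0
  rw [key, mul_left_comm, hn, mul_zero]

theorem pow_mul_eq_one_of_pow_mul_reflect_eq_one {q e : k} (hq : q ≠ 0) {m r : ℕ}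
    (hroot : q ^ (m + r + 2) = 1) (hm : q ^ m * (e * q ^ (2 * (m + r + 1)))⁻¹ = 1) :
    q ^ r * e = 1 := by
  have he : e ≠ 0 := by rintro rfl; simp at hm
  have hm' : e * q ^ (2 * (m + r + 1)) = q ^ m := by
    field_simp at hm
    exact hm.symm
  apply mul_left_cancel₀ (pow_ne_zero m hq)
  linear_combination (-(e * q ^ (m + r))) * hroot + hm'

theorem isLeast_cartanRoots_reflect {q e : k} (hq : q ≠ 0) (he : e ≠ 0) {n : ℕ}
    (h : IsLeast (cartanRoots q e) n) : IsLeast (cartanRoots q (e * q ^ (2 * n))⁻¹) n := by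
  refine ⟨mem_cartanRoots_reflect hq he h.1, fun m hm => ?_⟩
  by_contra! hmn
  obtain ⟨r, rfl⟩ := Nat.exists_eq_add_of_lt hmn
  rcases mem_cartanRoots_iff.1 hm with hqm | hm
  · have := h.2 (mem_cartanRoots_iff.2 (.inl hqm))
    omega
  rcases mem_cartanRoots_iff.1 h.1 with hqn | hn
  · have hroot := pow_eq_one_of_qInt_eq_zero hqn
    have := h.2 (mem_cartanRoots_iff.2 (.inr
      (pow_mul_eq_one_of_pow_mul_reflect_eq_one hq hroot hm)))
    omega
  · have hfix : (e * q ^ (2 * (m + r + 1)))⁻¹ = e := by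
      refine inv_eq_of_mul_eq_one_left ?_
      linear_combination (q ^ (m + r + 1) * e + 1) * hn
    have := h.2 (mem_cartanRoots_iff.2 (.inr (hfix ▸ hm)))
    omega

end CartanRoots

section Reflect

variable {k : Type*} [Field k] {θ : ℕ}

@[ext]
theorem DynkinDatum.ext {A B : DynkinDatum k θ} (hv : A.v = B.v) (he : A.e = B.e) : A = B := by
  cases A
  cases B
  congr

theorem aij_self (D : DynkinDatum k θ) (i : Fin θ) : aij D i i = 2 :=
  if_pos rfl

theorem aij_of_ne (D : DynkinDatum k θ) {i j : Fin θ} (h : i ≠ j) :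
    aij D i j = -(sInf (cartanSet D i j) : ℕ) :=
  if_neg h

theorem cartanSet_eq_cartanRoots (D : DynkinDatum k θ) (i j : Fin θ) :
    cartanSet D i j = cartanRoots (D.v i : k) (D.e i j) :=
  rfl

theorem reflect_v (D : DynkinDatum k θ) (i j : Fin θ) :
    (reflect D i).v j = D.v j * D.e i j ^ (-aij D i j) * D.v i ^ (aij D i j ^ 2) :=
  rfl

theorem reflect_e (D : DynkinDatum k θ) (i j l : Fin θ) :
    (reflect D i).e j l = D.e j l * D.e i l ^ (-aij D i j) * D.e i j ^ (-aij D i l) *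
      D.v i ^ (2 * aij D i j * aij D i l) :=
  rfl

variable {D : DynkinDatum k θ}

theorem reflect_v_self (hD : IsDynkin D) (i : Fin θ) : (reflect D i).v i = D.v i := by
  rw [reflect_v, aij_self, hD.2 i, ← Additive.ofMul.apply_eq_iff_eq]
  simp only [ofMul_mul, ofMul_zpow]
  module

theorem reflect_e_self_left (hD : IsDynkin D) (i j : Fin θ) :
    (reflect D i).e i j = (D.e i j)⁻¹ * D.v i ^ (2 * aij D i j) := by
  rw [reflect_e, aij_self, hD.2 i, ← Additive.ofMul.apply_eq_iff_eq]
  simp only [ofMul_mul, ofMul_zpow, ofMul_inv]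
  module

theorem isLeast_cartanSet_reflect (hD : IsDynkin D) (i : Fin θ) {j : Fin θ} (hij : i ≠ j)
    (hne : (cartanSet D i j).Nonempty) :
    IsLeast (cartanSet (reflect D i) i j) (sInf (cartanSet D i j)) := by
  have he : ((reflect D i).e i j : k) =
      (D.e i j * D.v i ^ (2 * sInf (cartanSet D i j)) : k)⁻¹ := by
    rw [reflect_e_self_left hD i, aij_of_ne D hij, mul_neg, zpow_neg, ← mul_inv]
    norm_cast
  rw [cartanSet_eq_cartanRoots, reflect_v_self hD i, he]
  exact isLeast_cartanRoots_reflect (Units.ne_zero _) (Units.ne_zero _)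
    ⟨Nat.sInf_mem hne, fun m hm => Nat.sInf_le hm⟩

theorem aij_reflect_self (hD : IsDynkin D) (i : Fin θ) (hfin : IFinite D i) (j : Fin θ) :
    aij (reflect D i) i j = aij D i j := by
  rcases eq_or_ne i j with rfl | hij
  · rw [aij_self, aij_self]
  · rw [aij_of_ne _ hij, aij_of_ne _ hij,
      (isLeast_cartanSet_reflect hD i hij (hfin j hij.symm)).csInf_eq]

theorem iFinite_reflect (hD : IsDynkin D) (i : Fin θ) (hfin : IFinite D i) :
    IFinite (reflect D i) i := fun j hji =>
  ⟨_, (isLeast_cartanSet_reflect hD i hji.symm (hfin j hji)).1⟩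

theorem reflect_reflect (hD : IsDynkin D) (i : Fin θ) (hfin : IFinite D i) :
    reflect (reflect D i) i = D := by
  have ha := aij_reflect_self hD i hfin
  ext1
  · funext j
    rw [reflect_v, ha, reflect_v_self hD i, reflect_e_self_left hD i, reflect_v,
      ← Additive.ofMul.apply_eq_iff_eq]
    simp only [ofMul_mul, ofMul_zpow, ofMul_inv]
    module
  · funext j l
    rw [reflect_e, ha, ha, reflect_v_self hD i, reflect_e_self_left hD i, reflect_e_self_left hD i,
      reflect_e, ← Additive.ofMul.apply_eq_iff_eq]
    simp only [ofMul_mul, ofMul_zpow, ofMul_inv]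
    module

end Reflect

/-- Let `D` be an `i`-finite Dynkin datum.  Then:
(1) the reflected datum has the same `i`-th row of Cartan integers,
`a_{ij}^{R_i(D)} = a_{ij}^D` for all `j` (hence also `s_i^{R_i(D)} = s_i^D` and
`m_i^{R_i(D)} = m_i^D`); (2) `R_i(D)` is `i`-finite; (3) `R_i(R_i(D)) = D`. -/
theorem reflect_cartan_eq_and_involutive {k : Type*} [Field k] {θ : ℕ}
    (D : DynkinDatum k θ) (hD : IsDynkin D) (i : Fin θ) (hfin : IFinite D i) :
    (∀ j : Fin θ, aij (reflect D i) i j = aij D i j) ∧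
    qSet (reflect D i) i = qSet D i ∧
    IFinite (reflect D i) i ∧
    reflect (reflect D i) i = D :=
  ⟨aij_reflect_self hD i hfin, by rw [qSet, qSet, reflect_v_self hD i],
    iFinite_reflect hD i hfin, reflect_reflect hD i hfin⟩

end Stmt
end

section
/- Let k be a field, D a Dynkin datum on θ vertices, and let K = k(t_1,…,t_θ) be the rational function field. Define the extended Dynkin datum D^t on θ+1 vertices over K by D^t_j = D_j and D^t_{jl} = D_{jl} for j, l ≤ θ, D^t_{θ+1} = 1, and D^t_{j(θ+1)} = t_j for j ≤ θ. Then for each i ≤ θ: (1) the Cartan integer satisfies −a^{D^t}_{i(θ+1)} = m_i^D := min{ m ∈ ℕ₀ : (m+1)_{D_i} = 0 } (whenever either side exists); (2) D^t is i-finite if and only if D is i-finite and m_i^D exists. -/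
namespace Stmt

variable (k : Type*) [Field k] (θ : ℕ)

/-- The rational function field `K = k(t_1,…,t_θ)`. -/
abbrev RatFld := FractionRing (MvPolynomial (Fin θ) k)

/-- The canonical embedding `k^× → K^×`. -/
noncomputable def uMap (c : kˣ) : (RatFld k θ)ˣ :=
  Units.map
    ((algebraMap (MvPolynomial (Fin θ) k) (RatFld k θ)).comp
      (MvPolynomial.C : k →+* MvPolynomial (Fin θ) k)).toMonoidHom c

/-- The indeterminate `t_j` as a unit of `K = k(t_1,…,t_θ)`. -/
noncomputable def tUnit (j : Fin θ) : (RatFld k θ)ˣ :=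
  Units.mk0 (algebraMap (MvPolynomial (Fin θ) k) (RatFld k θ) (MvPolynomial.X j))
    (by
      intro h
      have hinj : Function.Injective
          (algebraMap (MvPolynomial (Fin θ) k) (RatFld k θ)) :=
        IsFractionRing.injective _ _
      rw [← map_zero (algebraMap (MvPolynomial (Fin θ) k) (RatFld k θ))] at h
      exact MvPolynomial.X_ne_zero j (hinj h))

/-- The extended Dynkin datum `D^t` on `θ+1` vertices over `K = k(t_1,…,t_θ)`:
`D^t_j = D_j`, `D^t_{jl} = D_{jl}` for `j, l ≤ θ`, `D^t_{θ+1} = 1`,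
`D^t_{j(θ+1)} = t_j`. -/
noncomputable def extD (D : DynkinDatum k θ) : DynkinDatum (RatFld k θ) (θ + 1) where
  v j := if h : (j : ℕ) < θ then uMap k θ (D.v ⟨j, h⟩) else 1
  e j l :=
    if hj : (j : ℕ) < θ then
      (if hl : (l : ℕ) < θ then uMap k θ (D.e ⟨j, hj⟩ ⟨l, hl⟩) else tUnit k θ ⟨j, hj⟩)
    else (if hl : (l : ℕ) < θ then tUnit k θ ⟨l, hl⟩ else 1)

variable {k θ}

theorem qInt_map {L : Type*} [Field L] (f : k →+* L) (a : k) (m : ℕ) :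
    f (qInt a m) = qInt (f a) m := by
  simp only [qInt, map_sum, map_pow]

theorem C_mul_X_ne_one {R σ : Type*} [CommSemiring R] [Nontrivial R] (c : R) (j : σ) :
    MvPolynomial.C c * MvPolynomial.X j ≠ (1 : MvPolynomial σ R) := by
  intro h
  have h0 := congrArg (MvPolynomial.coeff 0) h
  simp [MvPolynomial.coeff_C_mul, MvPolynomial.coeff_zero_X] at h0

theorem algebraMap_mul_X_ne_one (c : k) (j : Fin θ) :
    algebraMap k (RatFld k θ) c *
      algebraMap (MvPolynomial (Fin θ) k) (RatFld k θ) (MvPolynomial.X j) ≠ 1 := by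
  rw [IsScalarTower.algebraMap_apply k (MvPolynomial (Fin θ) k), ← map_mul, ← map_one
    (algebraMap (MvPolynomial (Fin θ) k) (RatFld k θ)),
    (IsFractionRing.injective (MvPolynomial (Fin θ) k) (RatFld k θ)).ne_iff]
  exact C_mul_X_ne_one c j

theorem extD_v_castSucc (D : DynkinDatum k θ) (i : Fin θ) :
    ((extD k θ D).v i.castSucc : RatFld k θ) = algebraMap k (RatFld k θ) (D.v i) := by
  simp only [extD, Fin.val_castSucc, i.is_lt, dif_pos]
  rfl

theorem extD_e_castSucc (D : DynkinDatum k θ) (j l : Fin θ) :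
    ((extD k θ D).e j.castSucc l.castSucc : RatFld k θ) =
      algebraMap k (RatFld k θ) (D.e j l) := by
  simp only [extD, Fin.val_castSucc, j.is_lt, l.is_lt, dif_pos]
  rfl

theorem extD_e_castSucc_last (D : DynkinDatum k θ) (i : Fin θ) :
    ((extD k θ D).e i.castSucc (Fin.last θ) : RatFld k θ) =
      algebraMap (MvPolynomial (Fin θ) k) (RatFld k θ) (MvPolynomial.X i) := by
  simp [extD, tUnit, i.is_lt]

theorem cartanSet_extD_castSucc (D : DynkinDatum k θ) (i j : Fin θ) :
    cartanSet (extD k θ D) i.castSucc j.castSucc = cartanSet D i j := by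
  ext m
  simp only [cartanSet, Set.mem_ofPred_eq, extD_v_castSucc, extD_e_castSucc,
    ← qInt_map (algebraMap k (RatFld k θ)), ← map_pow, ← map_mul,
    ← map_one (algebraMap k (RatFld k θ)), ← map_sub, map_eq_zero]

theorem cartanSet_extD_castSucc_last (D : DynkinDatum k θ) (i : Fin θ) :
    cartanSet (extD k θ D) i.castSucc (Fin.last θ) = qSet D i := by
  ext m
  simp only [cartanSet, qSet, Set.mem_ofPred_eq, extD_v_castSucc, extD_e_castSucc_last,
    ← qInt_map (algebraMap k (RatFld k θ)), ← map_pow, mul_eq_zero, map_eq_zero,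
    sub_eq_zero, algebraMap_mul_X_ne_one, or_false]

theorem iFinite_extD_castSucc_iff (D : DynkinDatum k θ) (i : Fin θ) :
    IFinite (extD k θ D) i.castSucc ↔ IFinite D i ∧ (qSet D i).Nonempty := by
  simp only [IFinite, Fin.forall_fin_succ', ne_eq, Fin.castSucc_inj, cartanSet_extD_castSucc,
    cartanSet_extD_castSucc_last, (Fin.castSucc_lt_last i).ne', not_false_eq_true, forall_const]

theorem extD_cartan_last_and_iFinite_general {k : Type*} [Field k] {θ : ℕ}
    (D : DynkinDatum k θ) (i : Fin θ) :
    ((cartanSet (extD k θ D) i.castSucc (Fin.last θ)).Nonempty ↔ (qSet D i).Nonempty) ∧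
    ((qSet D i).Nonempty →
      -(aij (extD k θ D) i.castSucc (Fin.last θ)) = Int.ofNat (sInf (qSet D i))) ∧
    (IFinite (extD k θ D) i.castSucc ↔ (IFinite D i ∧ (qSet D i).Nonempty)) := by
  rw [cartanSet_extD_castSucc_last, iFinite_extD_castSucc_iff]
  refine ⟨Iff.rfl, fun _ => ?_, Iff.rfl⟩
  rw [aij, if_neg (Fin.castSucc_lt_last i).ne, cartanSet_extD_castSucc_last, neg_neg]

/-- Let `D` be a Dynkin datum on `θ` vertices and `D^t` the extended
datum on `θ+1` vertices over `k(t_1,…,t_θ)`.  Then for each `i ≤ θ`: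
(1) the minimum defining `−a^{D^t}_{i(θ+1)}` exists iff `m_i^D` exists, and whenever they
exist, `−a^{D^t}_{i(θ+1)} = m_i^D`; (2) `D^t` is `i`-finite iff `D` is `i`-finite and
`m_i^D` exists. -/
theorem extD_cartan_last_and_iFinite {k : Type*} [Field k] {θ : ℕ}
    (D : DynkinDatum k θ) (hD : IsDynkin D) (i : Fin θ) :
    ((cartanSet (extD k θ D) i.castSucc (Fin.last θ)).Nonempty ↔ (qSet D i).Nonempty) ∧
    ((qSet D i).Nonempty →
      -(aij (extD k θ D) i.castSucc (Fin.last θ)) = Int.ofNat (sInf (qSet D i))) ∧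
    (IFinite (extD k θ D) i.castSucc ↔ (IFinite D i ∧ (qSet D i).Nonempty)) :=
  extD_cartan_last_and_iFinite_general D i

end Stmt
end
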